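/- Suppose s ∈ C_O, and for every vertex v a set A(v) of enforcements valid for v in G' is given. For a vertex v let B(v) be the set of enforcements P such that there exists Q ∈ A(v) with either (s ∉ dom Q and Q ⊑ P), or (for every vertex w with χ(w) = t there exists R ∈ A(w) with R(s) even or undefined and Merge(Q, s, R) ⊑ P). Then B(v) is complete for v in G'': for every positional strategy ρ that is safe from v in G'', Φ(G'', ρ, v) ∈ B(v). -/

import Mathlib

open Classical

/-- `p ≺ q` iff `(-1)^p * p < (-1)^q * q` computed in `ℤ`. -/
def prec (p q : ℕ) : Prop := ((-1 : ℤ) ^ p * p < (-1 : ℤ) ^ q * q)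

/-- `p ⪯ q` iff `p ≺ q` or `p = q`. -/
def preceq (p q : ℕ) : Prop := prec p q ∨ p = q

/-- An enforcement is a partial function `C ⇀ ℕ`, modelled as `C → Option ℕ`.
`esub P Q` is the relation `P ⊑ Q`: `dom P ⊆ dom Q` and for every `a ∈ dom P`,
`Q a ⪯ P a`. -/
def esub {C : Type*} (P Q : C → Option ℕ) : Prop :=
  ∀ a p, P a = some p → ∃ q, Q a = some q ∧ preceq q p

/-- The `⪯`-minimum of a set of naturals, when it exists. -/
noncomputable def pmin (S : Set ℕ) : Option ℕ :=
  if h : ∃ m ∈ S, ∀ x ∈ S, preceq m x then some h.choose else none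

/-- The union `P ⊔ Q`: its domain is `dom P ∪ dom Q` and its value at `a`
is the `⪯`-minimum of the defined ones among `P a`, `Q a`. -/
noncomputable def eunion {C : Type*} (P Q : C → Option ℕ) : C → Option ℕ := fun a =>
  match P a, Q a with
  | none, q => q
  | some p, none => some p
  | some p, some q => some (if preceq p q then p else q)

/-- The lift `Q↑r`: same domain as `Q`, value `max (Q a) r`. -/
def elift {C : Type*} (Q : C → Option ℕ) (r : ℕ) : C → Option ℕ :=
  fun a => (Q a).map fun q => max q r

/-- `Merge(P, c, Q)`, where `CE` is the set of colors of player E (the colors of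
player O form its complement). -/
noncomputable def emerge {C : Type*} (CE : Set C) (P : C → Option ℕ) (c : C)
    (Q : C → Option ℕ) : C → Option ℕ :=
  match P c with
  | none => P
  | some r =>
      if c ∈ CE then eunion (fun a => if a = c then none else P a) (elift Q r)
      else eunion P (elift Q r)

/-- An arena: a directed graph with vertices partitioned between the players;
`owner u = true` means `u` belongs to player E. -/
structure Arena (V : Type*) where
  owner : V → Bool
  edge : V → V → Prop

/-- A strategy for player E in a stop parity game on arena `A`: to every finite
history (the list of previously visited vertices) and current vertex `u ∈ V_E` it
assigns either a vertex `w` with `edge u w` (`some w`) or the move STOP (`none`). -/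
structure EStrategy {V : Type*} (A : Arena V) where
  move : List V → V → Option V
  legal : ∀ h u w, move h u = some w → A.edge u w

/-- A play from `v` in the stop parity game on arena `A`: a maximal sequence of
vertices starting at `v` and following edges; a finite play either is ended
by the STOP move of player E at one of his vertices (`stopped = true`) or ends at
a vertex with no outgoing edges (`stopped = false`). -/
structure Play {V : Type*} (A : Arena V) (v : V) where
  seq : ℕ → Option V
  stopped : Bool
  start : seq 0 = some v
  none_succ : ∀ n, seq n = none → seq (n + 1) = none
  step : ∀ n u w, seq n = some u → seq (n + 1) = some w → A.edge u w
  maximal : ∀ n u, seq n = some u → seq (n + 1) = none →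
    (stopped = true ∧ A.owner u = true) ∨ (stopped = false ∧ ∀ w, ¬ A.edge u w)

/-- The history of a play before position `n` (the list of its first `n` vertices). -/
def Play.hist {V : Type*} {A : Arena V} {v : V} (p : Play A v) (n : ℕ) : List V :=
  (List.range n).filterMap p.seq

/-- A play is consistent with a strategy `ρ` of player E if every move made from a
vertex of player E is the one prescribed by `ρ` (where `ρ` prescribing `none` means
that the play is ended by STOP). -/
def ConsistentWith {V : Type*} {A : Arena V} {v : V} (ρ : EStrategy A) (p : Play A v) :
    Prop :=
  ∀ n u, p.seq n = some u → A.owner u = true →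
    p.seq (n + 1) = ρ.move (p.hist n) u ∧ (p.seq (n + 1) = none → p.stopped = true)

/-- A play is finite if its sequence is eventually `none`. -/
def Play.IsFinite {V : Type*} {A : Arena V} {v : V} (p : Play A v) : Prop :=
  ∃ n, p.seq n = none

/-- A play ended by the STOP move. -/
def Play.EndedByStop {V : Type*} {A : Arena V} {v : V} (p : Play A v) : Prop :=
  p.IsFinite ∧ p.stopped = true

/-- The maximum rank occurring infinitely often on a play. -/
noncomputable def infRank {V : Type*} {A : Arena V} {v : V} (rank : V → ℕ)
    (p : Play A v) : ℕ :=
  sSup {r | ∀ N, ∃ n, N ≤ n ∧ ∃ u, p.seq n = some u ∧ rank u = r}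

/-- Player O wins a play: it is finite, not ended by STOP, and ends at a vertex of
player E, or it is infinite and the maximum rank occurring infinitely often is odd. -/
def OWinsPlay {V : Type*} {A : Arena V} {v : V} (rank : V → ℕ) (p : Play A v) : Prop :=
  (∃ n u, p.seq n = some u ∧ p.seq (n + 1) = none ∧ p.stopped = false ∧
    A.owner u = true) ∨
  ((∀ n, p.seq n ≠ none) ∧ Odd (infRank rank p))

/-- Player E wins a play: it is finite, not ended by STOP, and ends at a vertex of
player O, or it is infinite and the maximum rank occurring infinitely often is even. -/
def EWinsPlay {V : Type*} {A : Arena V} {v : V} (rank : V → ℕ) (p : Play A v) : Prop :=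
  (∃ n u, p.seq n = some u ∧ p.seq (n + 1) = none ∧ p.stopped = false ∧
    A.owner u = false) ∨
  ((∀ n, p.seq n ≠ none) ∧ Even (infRank rank p))

/-- A strategy is safe from `v` if no play from `v` consistent with it is won by O. -/
def SafeFrom {V : Type*} (A : Arena V) (rank : V → ℕ) (ρ : EStrategy A) (v : V) : Prop :=
  ∀ p : Play A v, ConsistentWith ρ p → ¬ OWinsPlay rank p

/-- A strategy is winning from `v` if every play from `v` consistent with it is won
by E. -/
def WinningFrom {V : Type*} (A : Arena V) (rank : V → ℕ) (ρ : EStrategy A) (v : V) :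
    Prop :=
  ∀ p : Play A v, ConsistentWith ρ p → EWinsPlay rank p

/-- A strategy of the ordinary parity game: it never plays STOP when an outgoing
edge exists. -/
def NonStopping {V : Type*} {A : Arena V} (ρ : EStrategy A) : Prop :=
  ∀ h u, A.owner u = true → (∃ w, A.edge u w) → ρ.move h u ≠ none

/-- A strategy is positional if its move depends only on the current vertex. -/
def Positional {V : Type*} {A : Arena V} (ρ : EStrategy A) : Prop :=
  ∀ h h' u, ρ.move h u = ρ.move h' u

/-- `ConsPath A ρ v h u`: starting at `v` there is a finite prefix of a play
consistent with `ρ` whose already-visited vertices are `h` and whose current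
(last) vertex is `u`; the full prefix is `h ++ [u]`. -/
inductive ConsPath {V : Type*} (A : Arena V) (ρ : EStrategy A) (v : V) :
    List V → V → Prop
  | refl : ConsPath A ρ v [] v
  | stepO (h : List V) (u w : V) :
      ConsPath A ρ v h u → A.owner u = false → A.edge u w → ConsPath A ρ v (h ++ [u]) w
  | stepE (h : List V) (u w : V) :
      ConsPath A ρ v h u → A.owner u = true → ρ.move h u = some w →
      ConsPath A ρ v (h ++ [u]) w

/-- The maximum rank of a vertex on a finite prefix of a play. -/
def maxRank {V : Type*} (rank : V → ℕ) (l : List V) : ℕ := (l.map rank).foldr max 0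

/-- The enforcement `Φ(G, ρ, v)` of a strategy `ρ` from a vertex `v` in the stop
parity game with player-aware coloring `χ`: its value at a color `c` is the
`⪯`-minimum of the maximum ranks of finite prefixes of plays from `v` consistent
with `ρ` that end at a vertex `w` of color `c`, where for `w ∈ V_E` only prefixes
at which `ρ` answers STOP are considered (undefined if there is no such prefix). -/
noncomputable def Phi {V C : Type*} (A : Arena V) (rank : V → ℕ) (χ : V → C)
    (ρ : EStrategy A) (v : V) : C → Option ℕ :=
  fun c => pmin {r | ∃ (w : V) (h : List V), χ w = c ∧ ConsPath A ρ v h w ∧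
    (A.owner w = true → ρ.move h w = none) ∧ r = maxRank rank (h ++ [w])}

/-- A set `S` of enforcements is valid for `v`: sound, complete and up-closed. -/
def ValidFamily {V C : Type*} (A : Arena V) (rank : V → ℕ) (χ : V → C) (v : V)
    (S : Set (C → Option ℕ)) : Prop :=
  (∀ P ∈ S, ∃ ρ : EStrategy A, SafeFrom A rank ρ v ∧ esub (Phi A rank χ ρ v) P) ∧
  (∀ ρ : EStrategy A, Positional ρ → SafeFrom A rank ρ v → Phi A rank χ ρ v ∈ S) ∧
  (∀ P ∈ S, ∀ Q, esub P Q → Q ∈ S)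

/-- The arena obtained by adding a directed edge from every vertex of color `s` to
every vertex of color `t`. -/
def addEdges {V C : Type*} (A : Arena V) (χ : V → C) (s t : C) : Arena V where
  owner := A.owner
  edge := fun u w => A.edge u w ∨ (χ u = s ∧ χ w = t)

section Aux

private def emb (n : ℕ) : ℤ := (-1)^n * n

private lemma emb_injective : Function.Injective emb := by
  intro p q h
  have := congrArg Int.natAbs h
  simpa [emb, Int.natAbs_mul, Int.natAbs_pow] using this

private lemma preceq_of_emb_le {p q : ℕ} (h : emb p ≤ emb q) : preceq p q := by
  rcases lt_or_eq_of_le h with h | h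
  · exact Or.inl h
  · exact Or.inr (emb_injective h)

private lemma pmin_mem {S : Set ℕ} {m : ℕ} (h : pmin S = some m) :
    m ∈ S ∧ ∀ x ∈ S, preceq m x := by
  unfold pmin at h
  split at h
  · next hex => exact Option.some.inj h ▸ hex.choose_spec
  · exact absurd h (by simp)

private lemma pmin_le {S : Set ℕ} {M p : ℕ} (hb : ∀ x ∈ S, x ≤ M) (hp : p ∈ S) :
    ∃ m, pmin S = some m ∧ m ∈ S ∧ preceq m p := by
  have hfin : S.Finite := Set.Finite.subset (Set.finite_Iic M) (fun x hx => hb x hx)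
  obtain ⟨a, ha, hmin⟩ := Set.exists_min_image S emb hfin ⟨p, hp⟩
  have hex : ∃ m ∈ S, ∀ x ∈ S, preceq m x :=
    ⟨a, ha, fun x hx => preceq_of_emb_le (hmin x hx)⟩
  refine ⟨hex.choose, ?_, hex.choose_spec.1, hex.choose_spec.2 p hp⟩
  unfold pmin
  rw [dif_pos hex]

private lemma foldr_max_eq (l : List ℕ) (b : ℕ) :
    l.foldr max b = max (l.foldr max 0) b := by
  induction l with
  | nil => simp
  | cons a l ih => simp [ih, max_assoc]

private lemma maxRank_append {V : Type*} (rank : V → ℕ) (l1 l2 : List V) :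
    maxRank rank (l1 ++ l2) = max (maxRank rank l1) (maxRank rank l2) := by
  unfold maxRank
  rw [List.map_append, List.foldr_append, foldr_max_eq]

private lemma maxRank_le {V : Type*} [Fintype V] (rank : V → ℕ) (l : List V) :
    maxRank rank l ≤ Finset.univ.sup rank := by
  induction l with
  | nil => simp [maxRank]
  | cons a l ih =>
    unfold maxRank at *
    simp only [List.map_cons, List.foldr_cons]
    exact max_le (Finset.le_sup (Finset.mem_univ a)) ih

private lemma foldr_max_mem (l : List ℕ) (hl : l ≠ []) : l.foldr max 0 ∈ l := by
  induction l with
  | nil => simp at hl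
  | cons a l ih =>
    rcases eq_or_ne l [] with rfl | hne
    · simp
    · rcases le_total a (l.foldr max 0) with h | h
      · simp only [List.foldr_cons, max_eq_right h]
        exact List.mem_cons_of_mem _ (ih hne)
      · simp [List.foldr_cons, max_eq_left h]

private lemma le_foldr_max (l : List ℕ) : ∀ x ∈ l, x ≤ l.foldr max 0 := by
  induction l with
  | nil => simp
  | cons a l ih =>
    intro x hx
    rcases List.mem_cons.mp hx with rfl | hx
    · exact le_max_left _ _
    · exact le_trans (ih x hx) (le_max_right _ _)

private lemma sSup_mem_list (l : List ℕ) (hl : l ≠ []) :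
    sSup {r | r ∈ l} = l.foldr max 0 := by
  apply le_antisymm
  · exact csSup_le ⟨_, foldr_max_mem l hl⟩ (fun x hx => le_foldr_max l x hx)
  · exact le_csSup ⟨_, fun x hx => le_foldr_max l x hx⟩ (foldr_max_mem l hl)

end Aux

section Game

variable {V C : Type*} (A : Arena V) (rank : V → ℕ) (χ : V → C) (s t : C)
  (ρ : EStrategy (addEdges A χ s t))

/-- One step of the token, following either an O-move along an edge of `G''` or the
positional move of `ρ`. -/
def stepRel : V → V → Prop := fun u w =>
  (A.owner u = false ∧ (addEdges A χ s t).edge u w) ∨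
  (A.owner u = true ∧ ρ.move [] u = some w)

/-- The infinite play following a trajectory `f`. -/
def trajPlay {V : Type*} (B : Arena V) (v : V) (f : ℕ → V) (h0 : f 0 = v)
    (hstep : ∀ n, B.edge (f n) (f (n+1))) : Play B v where
  seq := fun n => some (f n)
  stopped := false
  start := congrArg some h0
  none_succ := fun n h => by simp at h
  step := fun n u w hu hw => by
    obtain rfl := Option.some.inj hu
    obtain rfl := Option.some.inj hw
    exact hstep n
  maximal := fun n u _ h => by simp at h

private lemma keyInf (hpos : Positional ρ) {v : V}
    (hsafe : SafeFrom (addEdges A χ s t) rank ρ v)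
    (f : ℕ → V) (h0 : f 0 = v) (hstep : ∀ n, stepRel A χ s t ρ (f n) (f (n+1))) :
    Even (sSup {r | ∀ N, ∃ n, N ≤ n ∧ rank (f n) = r}) := by
  have hedge : ∀ n, (addEdges A χ s t).edge (f n) (f (n+1)) := fun n => by
    rcases hstep n with ⟨_, h⟩ | ⟨_, h⟩
    · exact h
    · exact ρ.legal [] _ _ h
  let p : Play (addEdges A χ s t) v := trajPlay (addEdges A χ s t) v f h0 hedge
  have hcons : ConsistentWith ρ p := by
    intro n u hu howner
    obtain rfl : f n = u := Option.some.inj hu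
    rcases hstep n with ⟨ho, _⟩ | ⟨_, hm⟩
    · rw [show A.owner (f n) = true from howner] at ho; cases ho
    · refine ⟨?_, fun h => absurd h (Option.some_ne_none _)⟩
      show some (f (n+1)) = ρ.move (p.hist n) (f n)
      rw [hpos (p.hist n) [] (f n), hm]
  have hnwin := hsafe p hcons
  simp only [OWinsPlay, not_or] at hnwin
  have hinf : ∀ n, p.seq n ≠ none := fun n => Option.some_ne_none (f n)
  have heven : Even (infRank rank p) :=
    Nat.not_odd_iff_even.mp (fun hodd => hnwin.2 ⟨hinf, hodd⟩)
  have hset : {r | ∀ N, ∃ n, N ≤ n ∧ ∃ u, (some (f n) : Option V) = some u ∧ rank u = r}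
      = {r | ∀ N, ∃ n, N ≤ n ∧ rank (f n) = r} := by
    ext r
    constructor
    · intro h N
      obtain ⟨n, hn, u, hu, hr⟩ := h N
      exact ⟨n, hn, (Option.some.inj hu) ▸ hr⟩
    · intro h N
      obtain ⟨n, hn, hr⟩ := h N
      exact ⟨n, hn, f n, rfl, hr⟩
  have e1 : infRank rank p
      = sSup {r | ∀ N, ∃ n, N ≤ n ∧ ∃ u, (some (f n) : Option V) = some u ∧ rank u = r} := rfl
  rw [e1, hset] at heven
  exact heven

private def consT {V : Type*} (a : V) (f : ℕ → V) : ℕ → V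
  | 0 => a
  | n+1 => f n

private lemma consT_set {V : Type*} (rank : V → ℕ) (a : V) (f : ℕ → V) :
    {r | ∀ N, ∃ n, N ≤ n ∧ rank (consT a f n) = r}
      = {r | ∀ N, ∃ n, N ≤ n ∧ rank (f n) = r} := by
  ext r
  constructor
  · intro h N
    obtain ⟨n, hn, hr⟩ := h (N+1)
    match n, hn with
    | 0, hn => exact absurd hn (by omega)
    | n+1, hn => exact ⟨n, by omega, hr⟩
  · intro h N
    obtain ⟨n, hn, hr⟩ := h N
    exact ⟨n+1, by omega, hr⟩

private lemma traj_even (hpos : Positional ρ) {v x : V}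
    (hsafe : SafeFrom (addEdges A χ s t) rank ρ v)
    (hreach : Relation.ReflTransGen (stepRel A χ s t ρ) v x) :
    ∀ f : ℕ → V, f 0 = x → (∀ n, stepRel A χ s t ρ (f n) (f (n+1))) →
      Even (sSup {r | ∀ N, ∃ n, N ≤ n ∧ rank (f n) = r}) := by
  induction hreach with
  | refl => exact fun f h0 hstep => keyInf A rank χ s t ρ hpos hsafe f h0 hstep
  | @tail b c hR hstep ih =>
    intro f h0 hsteps
    rw [← consT_set rank b f]
    apply ih (consT b f) rfl
    intro n
    cases n with
    | zero =>
      show stepRel A χ s t ρ b (f 0)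
      rw [h0]; exact hstep
    | succ n => exact hsteps n

/-- The restriction of `ρ` to a strategy of the original game. -/
def rho' (hχs : ∀ u, A.owner u = true → χ u ≠ s) : EStrategy A where
  move := fun h u => if A.owner u = true then ρ.move h u else none
  legal := by
    intro h u w hm
    change (if A.owner u = true then ρ.move h u else none) = some w at hm
    split at hm
    · next ho =>
      rcases ρ.legal h u w hm with he | ⟨hus, _⟩
      · exact he
      · exact absurd hus (hχs u ho)
    · exact absurd hm (by simp)

@[simp] private lemma rho'_move (hχs : ∀ u, A.owner u = true → χ u ≠ s)
    (h : List V) (u : V) :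
    (rho' A χ s t ρ hχs).move h u = if A.owner u = true then ρ.move h u else none := rfl

private lemma rho'_pos (hpos : Positional ρ) (hχs : ∀ u, A.owner u = true → χ u ≠ s) :
    Positional (rho' A χ s t ρ hχs) := by
  intro h h' u
  by_cases ho : A.owner u = true <;> simp [ho, hpos h h' u]

private lemma consPath_mono (hχs : ∀ u, A.owner u = true → χ u ≠ s)
    {v u : V} {h : List V}
    (hcp : ConsPath A (rho' A χ s t ρ hχs) v h u) :
    ConsPath (addEdges A χ s t) ρ v h u := by
  induction hcp with
  | refl => exact ConsPath.refl
  | stepO h u w hc ho he ih => exact ConsPath.stepO h u w ih ho (Or.inl he)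
  | stepE h u w hc ho hm ih =>
    refine ConsPath.stepE h u w ih ho ?_
    rwa [rho'_move, if_pos ho] at hm

private lemma consPath_append {W : Type*} {B : Arena W} {τ : EStrategy B}
    (hpos : Positional τ) {v w x : W} {h1 h2 : List W}
    (hc1 : ConsPath B τ v h1 w) (hc2 : ConsPath B τ w h2 x) :
    ConsPath B τ v (h1 ++ h2) x := by
  induction hc2 with
  | refl => simpa using hc1
  | stepO h u y hc ho he ih =>
    rw [← List.append_assoc]
    exact ConsPath.stepO _ u y ih ho he
  | stepE h u y hc ho hm ih =>
    rw [← List.append_assoc]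
    refine ConsPath.stepE _ u y ih ho ?_
    rw [hpos (h1 ++ h) h u]; exact hm

private lemma consPath_reach (hpos : Positional ρ) {v u : V} {h : List V}
    (hcp : ConsPath (addEdges A χ s t) ρ v h u) :
    Relation.ReflTransGen (stepRel A χ s t ρ) v u := by
  induction hcp with
  | refl => exact Relation.ReflTransGen.refl
  | stepO h u w hc ho he ih => exact ih.tail (Or.inl ⟨ho, he⟩)
  | stepE h u w hc ho hm ih =>
    refine ih.tail (Or.inr ⟨ho, ?_⟩)
    rw [hpos [] h u]; exact hm

private lemma consPath_chain {W : Type*} {B : Arena W} {τ : EStrategy B}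
    (hpos : Positional τ) {v u : W} {h : List W} (hcp : ConsPath B τ v h u) :
    List.Chain' (fun x y => (B.owner x = false ∧ B.edge x y) ∨
        (B.owner x = true ∧ τ.move [] x = some y)) (h ++ [u])
      ∧ (h ++ [u]).head? = some v := by
  induction hcp with
  | refl => exact ⟨List.isChain_singleton v, rfl⟩
  | stepO h u w hc ho he ih =>
    refine ⟨List.isChain_append.mpr ⟨ih.1, List.isChain_singleton w, ?_⟩, ?_⟩
    · intro x hx y hy
      rw [List.getLast?_concat] at hx
      obtain rfl := Option.mem_some_iff.mp hx
      obtain rfl := Option.mem_some_iff.mp hy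
      exact Or.inl ⟨ho, he⟩
    · rw [List.head?_append, ih.2]; rfl
  | stepE h u w hc ho hm ih =>
    refine ⟨List.isChain_append.mpr ⟨ih.1, List.isChain_singleton w, ?_⟩, ?_⟩
    · intro x hx y hy
      rw [List.getLast?_concat] at hx
      obtain rfl := Option.mem_some_iff.mp hx
      obtain rfl := Option.mem_some_iff.mp hy
      refine Or.inr ⟨ho, ?_⟩
      rw [hpos [] h u]; exact hm
    · rw [List.head?_append, ih.2]; rfl

private lemma safe_aux (hpos : Positional ρ)
    (hχs : ∀ u, A.owner u = true → χ u ≠ s) {v x : V}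
    (hsafe : SafeFrom (addEdges A χ s t) rank ρ v)
    (hreach : Relation.ReflTransGen (stepRel A χ s t ρ) v x) :
    SafeFrom A rank (rho' A χ s t ρ hχs) x := by
  intro p hcons howins
  rcases howins with ⟨n, u, h1, h2, h3, h4⟩ | ⟨hinf, hodd⟩
  · have := (hcons n u h1 h4).2 h2
    rw [this] at h3; cases h3
  · have hex : ∀ n, ∃ u, p.seq n = some u := fun n => by
      rcases Option.ne_none_iff_exists.mp (hinf n) with ⟨u, hu⟩
      exact ⟨u, hu.symm⟩
    choose f hf using hex
    have hf0 : f 0 = x := by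
      have := p.start
      rw [hf 0] at this
      exact Option.some.inj this
    have hstep : ∀ n, stepRel A χ s t ρ (f n) (f (n+1)) := by
      intro n
      cases howner : A.owner (f n) with
      | false => exact Or.inl ⟨howner, Or.inl (p.step n _ _ (hf n) (hf (n+1)))⟩
      | true =>
        have hc := (hcons n (f n) (hf n) howner).1
        rw [hf (n+1)] at hc
        rw [rho'_move, if_pos howner, hpos (p.hist n) [] (f n)] at hc
        exact Or.inr ⟨howner, hc.symm⟩
    have heven := traj_even A rank χ s t ρ hpos hsafe hreach f hf0 hstep
    have hseteq : {r | ∀ N, ∃ n, N ≤ n ∧ rank (f n) = r}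
        = {r | ∀ N, ∃ n, N ≤ n ∧ ∃ u, p.seq n = some u ∧ rank u = r} := by
      ext r
      constructor
      · intro h N
        obtain ⟨n, hn, hr⟩ := h N
        exact ⟨n, hn, f n, hf n, hr⟩
      · intro h N
        obtain ⟨n, hn, u, hu, hr⟩ := h N
        refine ⟨n, hn, ?_⟩
        rw [hf n] at hu
        rw [Option.some.inj hu]; exact hr
    rw [hseteq] at heven
    exact (Nat.not_odd_iff_even.mpr heven) hodd

private lemma cyc_even (hpos : Positional ρ) {v w : V}
    (hsafe : SafeFrom (addEdges A χ s t) rank ρ v)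
    (hreach : Relation.ReflTransGen (stepRel A χ s t ρ) v w)
    (L : List V) (hL : L ≠ [])
    (hchain : List.Chain' (stepRel A χ s t ρ) L)
    (hhead : L.head? = some w)
    (hlast : stepRel A χ s t ρ (L.getLast hL) w) :
    Even (maxRank rank L) := by
  have hlen : 0 < L.length := List.length_pos_iff.mpr hL
  set f : ℕ → V := fun n => L.get ⟨n % L.length, Nat.mod_lt n hlen⟩ with hfdef
  have hmod : ∀ n : ℕ, (n+1) % L.length = (n % L.length + 1) % L.length := by
    intro n
    conv_lhs => rw [← Nat.div_add_mod n L.length]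
    rw [Nat.add_assoc, Nat.mul_add_mod]
  have hget0 : ∀ (m : ℕ) (hm : m % L.length = 0), L.get ⟨m % L.length, Nat.mod_lt m hlen⟩ = w := by
    intro m hm
    have : (⟨m % L.length, Nat.mod_lt m hlen⟩ : Fin L.length) = ⟨0, hlen⟩ := Fin.ext hm
    rw [this]
    cases L with
    | nil => exact absurd rfl hL
    | cons a L' =>
      have : a = w := by simpa using hhead
      simpa using this
  have hf0 : f 0 = w := hget0 0 (Nat.zero_mod _)
  have hstep : ∀ n, stepRel A χ s t ρ (f n) (f (n+1)) := by
    intro n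
    have hlt : n % L.length < L.length := Nat.mod_lt n hlen
    rcases eq_or_ne (n % L.length + 1) L.length with hc | hc
    · have h1 : (n+1) % L.length = 0 := by rw [hmod, hc, Nat.mod_self]
      have hfw : f (n+1) = w := hget0 (n+1) h1
      have hfl : f n = L.getLast hL := by
        rw [List.getLast_eq_getElem hL]
        show L.get _ = L.get _
        congr 1
        exact Fin.ext (by simp; omega)
      rw [hfw, hfl]
      exact hlast
    · have h1 : (n+1) % L.length = n % L.length + 1 := by
        rw [hmod]
        exact Nat.mod_eq_of_lt (by omega)
      have hch := List.isChain_iff_getElem.mp hchain (n % L.length) (by omega)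
      have hfe : f (n+1) = L.get ⟨n % L.length + 1, by omega⟩ := by
        show L.get _ = L.get _
        congr 1
        exact Fin.ext h1
      have hfn : f n = L.get ⟨n % L.length, hlt⟩ := rfl
      rw [hfe, hfn]
      exact hch
  have heven := traj_even A rank χ s t ρ hpos hsafe hreach f hf0 hstep
  have hsetcyc : {r | ∀ N, ∃ n, N ≤ n ∧ rank (f n) = r} = {r | r ∈ L.map rank} := by
    ext r
    constructor
    · intro h
      obtain ⟨n, _, hr⟩ := h 0
      exact hr ▸ List.mem_map_of_mem (f := rank) (L.get_mem _)
    · intro h N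
      obtain ⟨u, hu, hr⟩ := List.mem_map.mp h
      obtain ⟨i, hi⟩ := List.mem_iff_get.mp hu
      refine ⟨N * L.length + i.1, ?_, ?_⟩
      · have : N * 1 ≤ N * L.length := Nat.mul_le_mul_left N hlen
        omega
      · have hmi : (N * L.length + i.1) % L.length = i.1 := by
          rw [Nat.mul_comm, Nat.mul_add_mod]
          exact Nat.mod_eq_of_lt i.2
        have : f (N * L.length + i.1) = L.get i := by
          show L.get _ = L.get _
          congr 1
          exact Fin.ext hmi
        rw [this, hi, hr]
  have hmapne : L.map rank ≠ [] := by simpa using hL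
  rw [hsetcyc, sSup_mem_list (L.map rank) hmapne] at heven
  exact heven

end Game

private lemma emerge_some {C : Type*} (CE : Set C) (P R : C → Option ℕ) (c : C) (q0 : ℕ)
    (hc : P c = some q0) (hcE : c ∉ CE) : emerge CE P c R = eunion P (elift R q0) := by
  unfold emerge
  rw [hc]
  simp [hcE]

theorem stmt16 {V C : Type*} [Fintype V] [Fintype C] (A : Arena V) (rank : V → ℕ)
    (CE : Set C) (χ : V → C) (hχ : ∀ u, A.owner u = true ↔ χ u ∈ CE)
    (s t : C) (hs : s ∉ CE)
    (Afam : V → Set (C → Option ℕ))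
    (hvalid : ∀ v, ValidFamily A rank χ v (Afam v))
    (v : V) (ρ : EStrategy (addEdges A χ s t))
    (hpos : Positional ρ) (hsafe : SafeFrom (addEdges A χ s t) rank ρ v) :
    ∃ Q ∈ Afam v,
      (Q s = none ∧ esub Q (Phi (addEdges A χ s t) rank χ ρ v)) ∨
      (∀ w, χ w = t → ∃ R ∈ Afam w,
        (∀ r, R s = some r → Even r) ∧
          esub (emerge CE Q s R) (Phi (addEdges A χ s t) rank χ ρ v)) := by
  classical
  have hχs : ∀ u, A.owner u = true → χ u ≠ s := fun u hu hne => hs (hne ▸ (hχ u).mp hu)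
  set ρ' := rho' A χ s t ρ hχs with hρ'
  have hpos' : Positional ρ' := rho'_pos A χ s t ρ hpos hχs
  have hsafev : SafeFrom A rank ρ' v :=
    safe_aux A rank χ s t ρ hpos hχs hsafe Relation.ReflTransGen.refl
  have hQmem : Phi A rank χ ρ' v ∈ Afam v := (hvalid v).2.1 ρ' hpos' hsafev
  -- the bound on every maxRank
  have hM : ∀ (a : C) (x : ℕ),
      x ∈ {r | ∃ (w2 : V) (h2 : List V), χ w2 = a ∧ ConsPath (addEdges A χ s t) ρ v h2 w2 ∧
        ((addEdges A χ s t).owner w2 = true → ρ.move h2 w2 = none) ∧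
        r = maxRank rank (h2 ++ [w2])} → x ≤ Finset.univ.sup rank := by
    rintro a x ⟨w2, h2, -, -, -, rfl⟩
    exact maxRank_le rank _
  have memQ : ∀ (a : C) (p0 : ℕ), Phi A rank χ ρ' v a = some p0 →
      p0 ∈ {r | ∃ (w2 : V) (h2 : List V), χ w2 = a ∧ ConsPath (addEdges A χ s t) ρ v h2 w2 ∧
        ((addEdges A χ s t).owner w2 = true → ρ.move h2 w2 = none) ∧
        r = maxRank rank (h2 ++ [w2])} := by
    intro a p0 hp0
    simp only [Phi] at hp0
    obtain ⟨⟨x, hh, hχx, hcp, hstop, hrv⟩, -⟩ := pmin_mem hp0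
    refine ⟨x, hh, hχx, consPath_mono A χ s t ρ hχs hcp, ?_, hrv⟩
    intro ho
    have := hstop ho
    rwa [rho'_move, if_pos (show A.owner x = true from ho)] at this
  have hQsub : esub (Phi A rank χ ρ' v) (Phi (addEdges A χ s t) rank χ ρ v) := by
    intro a p hp
    obtain ⟨m, hm, -, hpre⟩ := pmin_le (hM a) (memQ a p hp)
    exact ⟨m, hm, hpre⟩
  refine ⟨Phi A rank χ ρ' v, hQmem, ?_⟩
  cases hQs : Phi A rank χ ρ' v s with
  | none => exact Or.inl ⟨rfl, hQsub⟩
  | some q0 =>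
    refine Or.inr (fun w hw => ?_)
    have hQs2 := hQs
    simp only [Phi] at hQs2
    obtain ⟨⟨u, h0, hχu, hcp0, -, hq0v⟩, -⟩ := pmin_mem hQs2
    have hou : A.owner u = false := by
      cases hou : A.owner u with
      | false => rfl
      | true => exact absurd ((hχ u).mp hou) (by rw [hχu]; exact hs)
    have hcp0'' : ConsPath (addEdges A χ s t) ρ v h0 u := consPath_mono A χ s t ρ hχs hcp0
    have hstep_uw : stepRel A χ s t ρ u w := Or.inl ⟨hou, Or.inr ⟨hχu, hw⟩⟩
    have hreachw : Relation.ReflTransGen (stepRel A χ s t ρ) v w :=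
      (consPath_reach A χ s t ρ hpos hcp0'').tail hstep_uw
    have hsafew : SafeFrom A rank ρ' w := safe_aux A rank χ s t ρ hpos hχs hsafe hreachw
    refine ⟨Phi A rank χ ρ' w, (hvalid w).2.1 ρ' hpos' hsafew, ?_, ?_⟩
    · -- evenness
      intro r hr
      simp only [Phi] at hr
      obtain ⟨⟨u', h1, hχu', hcp1, -, hrv⟩, -⟩ := pmin_mem hr
      obtain ⟨hch, hhd⟩ := consPath_chain hpos' hcp1
      have hch' : List.Chain' (stepRel A χ s t ρ) (h1 ++ [u']) := by
        refine hch.imp ?_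
        rintro x y (⟨hxo, hxe⟩ | ⟨hxo, hxm⟩)
        · exact Or.inl ⟨hxo, Or.inl hxe⟩
        · refine Or.inr ⟨hxo, ?_⟩
          rwa [rho'_move, if_pos hxo] at hxm
      have hne : h1 ++ [u'] ≠ [] := by simp
      have hou' : A.owner u' = false := by
        cases hou' : A.owner u' with
        | false => rfl
        | true => exact absurd ((hχ u').mp hou') (by rw [hχu']; exact hs)
      have hlaststep : stepRel A χ s t ρ ((h1 ++ [u']).getLast hne) w := by
        rw [List.getLast_concat]
        exact Or.inl ⟨hou', Or.inr ⟨hχu', hw⟩⟩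
      have := cyc_even A rank χ s t ρ hpos hsafe hreachw (h1 ++ [u']) hne hch' hhd hlaststep
      rwa [← hrv] at this
    · -- esub of the merge
      rw [emerge_some CE _ _ s q0 hQs hs]
      intro a p hp
      have memR : ∀ r0 : ℕ, Phi A rank χ ρ' w a = some r0 →
          max r0 q0 ∈ {r | ∃ (w2 : V) (h2 : List V), χ w2 = a ∧
            ConsPath (addEdges A χ s t) ρ v h2 w2 ∧
            ((addEdges A χ s t).owner w2 = true → ρ.move h2 w2 = none) ∧
            r = maxRank rank (h2 ++ [w2])} := by
        intro r0 hr0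
        simp only [Phi] at hr0
        obtain ⟨⟨x, ha, hχx, hcpx, hstopx, hr0v⟩, -⟩ := pmin_mem hr0
        have hcp2 : ConsPath (addEdges A χ s t) ρ v (h0 ++ [u]) w :=
          ConsPath.stepO h0 u w hcp0'' hou (Or.inr ⟨hχu, hw⟩)
        have hcp3 : ConsPath (addEdges A χ s t) ρ w ha x := consPath_mono A χ s t ρ hχs hcpx
        have hcp4 : ConsPath (addEdges A χ s t) ρ v ((h0 ++ [u]) ++ ha) x :=
          consPath_append hpos hcp2 hcp3
        refine ⟨x, (h0 ++ [u]) ++ ha, hχx, hcp4, ?_, ?_⟩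
        · intro ho
          rw [hpos ((h0 ++ [u]) ++ ha) ha x]
          have := hstopx ho
          rwa [rho'_move, if_pos (show A.owner x = true from ho)] at this
        · rw [List.append_assoc, maxRank_append, ← hq0v, ← hr0v]
          exact Nat.max_comm r0 q0
      have hpmem : p ∈ {r | ∃ (w2 : V) (h2 : List V), χ w2 = a ∧
          ConsPath (addEdges A χ s t) ρ v h2 w2 ∧
          ((addEdges A χ s t).owner w2 = true → ρ.move h2 w2 = none) ∧
          r = maxRank rank (h2 ++ [w2])} := by
        cases hQa : Phi A rank χ ρ' v a with
        | none =>
          cases hRa : Phi A rank χ ρ' w a with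
          | none => simp [eunion, elift, hQa, hRa] at hp
          | some r0 =>
            simp only [eunion, elift, hQa, hRa, Option.map_some] at hp
            exact (Option.some.inj hp) ▸ memR r0 hRa
        | some p0 =>
          cases hRa : Phi A rank χ ρ' w a with
          | none =>
            simp only [eunion, elift, hQa, hRa, Option.map_none] at hp
            exact (Option.some.inj hp) ▸ memQ a p0 hQa
          | some r0 =>
            simp only [eunion, elift, hQa, hRa, Option.map_some] at hp
            split at hp
            · exact (Option.some.inj hp) ▸ memQ a p0 hQa
            · exact (Option.some.inj hp) ▸ memR r0 hRa
      obtain ⟨m, hm, -, hpre⟩ := pmin_le (hM a) hpmem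
      exact ⟨m, hm, hpre⟩
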